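/- Let u : ℝ² → ℝ be a harmonic function on all of ℝ² satisfying u(x) = O(log |x|) as |x| → ∞. Then u is constant. -/

import Mathlib

/-!
Transported to `ℂ`, `u` is the real part of an entire function `F`. By Borel–Carathéodory on
the disc of radius `2|z|`, the logarithmic upper bound on `Re F` gives `|F z| = O(log |z|)`,
so Cauchy's estimate for `F'` on ever larger circles forces `F' = 0`.
-/

/-- The Laplacian of `u : ℝ² → ℝ`, as the sum of the second partial derivatives
in the coordinate directions. -/
noncomputable def lap (u : EuclideanSpace ℝ (Fin 2) → ℝ) (x : EuclideanSpace ℝ (Fin 2)) : ℝ :=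
  ∑ i : Fin 2,
    fderiv ℝ (fun y => fderiv ℝ u y (EuclideanSpace.single i 1)) x (EuclideanSpace.single i 1)

open Filter Asymptotics Metric Bornology InnerProductSpace Laplacian

section Laplacian

variable {E G F : Type*} [NormedAddCommGroup E] [InnerProductSpace ℝ E] [FiniteDimensional ℝ E]
  [NormedAddCommGroup G] [InnerProductSpace ℝ G] [FiniteDimensional ℝ G]
  [NormedAddCommGroup F] [NormedSpace ℝ F]

theorem InnerProductSpace.laplacian_comp_linearIsometryEquiv (f : E → F) (g : G ≃ₗᵢ[ℝ] E)
    (x : G) : Δ (f ∘ g) x = Δ f (g x) := by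
  have hcomp : iteratedFDeriv ℝ 2 (f ∘ g) x =
      (iteratedFDeriv ℝ 2 f (g x)).compContinuousLinearMap fun _ => (g : G →L[ℝ] E) := by
    simpa [iteratedFDerivWithin_univ] using
      g.toContinuousLinearEquiv.iteratedFDerivWithin_comp_right f uniqueDiffOn_univ
        (Set.mem_univ (g x)) 2
  let b := stdOrthonormalBasis ℝ G
  rw [laplacian_eq_iteratedFDeriv_orthonormalBasis _ b,
    laplacian_eq_iteratedFDeriv_orthonormalBasis _ (b.map g)]
  simp only [hcomp]
  congr 1 with i
  simp only [ContinuousMultilinearMap.compContinuousLinearMap_apply, OrthonormalBasis.map_apply]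
  congr 1 with j
  fin_cases j <;> rfl

theorem InnerProductSpace.HarmonicAt.comp_linearIsometryEquiv {f : E → F} (g : G ≃ₗᵢ[ℝ] E)
    {x : G} (hf : HarmonicAt f (g x)) : HarmonicAt (f ∘ g) x := by
  refine ⟨hf.1.comp x g.contDiff.contDiffAt, ?_⟩
  filter_upwards [g.continuous.continuousAt.eventually hf.2] with y hy
  rw [laplacian_comp_linearIsometryEquiv]
  exact hy

end Laplacian

theorem lap_eq_laplacian {u : EuclideanSpace ℝ (Fin 2) → ℝ} (hu : ContDiff ℝ 2 u)
    (x : EuclideanSpace ℝ (Fin 2)) : lap u x = Δ u x := by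
  have hu' : Differentiable ℝ (fderiv ℝ u) :=
    (hu.fderiv_right (m := 1) (by norm_num)).differentiable one_ne_zero
  rw [laplacian_eq_iteratedFDeriv_orthonormalBasis u (EuclideanSpace.basisFun (Fin 2) ℝ)]
  simp only [lap, iteratedFDeriv_two_apply, EuclideanSpace.basisFun_apply]
  congr 1 with i
  rw [fderiv_clm_apply (hu' x) (differentiableAt_const _)]
  simp

theorem Differentiable.apply_eq_apply_of_isLittleO_id {F : Type*} [NormedAddCommGroup F]
    [NormedSpace ℂ F] {f : ℂ → F} (hf : Differentiable ℂ f) (ho : f =o[cobounded ℂ] id)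
    (z w : ℂ) : f z = f w := by
  refine is_const_of_deriv_eq_zero hf (fun c => ?_) z w
  refine norm_le_zero_iff.mp (le_of_forall_pos_le_add fun ε hε => ?_)
  obtain ⟨r, -, hr⟩ := hasBasis_cobounded_norm.eventually_iff.mp (ho.bound (half_pos hε))
  set R := |r| + ‖c‖ + 1
  have hR0 : 0 < R := by positivity
  have hsphere : ∀ z ∈ sphere c R, ‖f z‖ ≤ ε * R := by
    intro z hz
    have hzc : ‖z - c‖ = R := by simpa [dist_eq_norm] using hz
    have hlower : R - ‖c‖ ≤ ‖z‖ := by linarith [norm_sub_le z c]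
    have hupper : ‖z‖ ≤ 2 * R := by linarith [norm_sub_norm_le z c, abs_nonneg r]
    calc ‖f z‖ ≤ ε / 2 * ‖z‖ := hr (by show r ≤ ‖z‖; linarith [le_abs_self r])
      _ ≤ ε / 2 * (2 * R) := by gcongr
      _ = ε * R := by ring
  calc ‖_root_.deriv f c‖ ≤ ε * R / R :=
        Complex.norm_deriv_le_of_forall_mem_sphere_norm_le hR0 hf.diffContOnCl hsphere
    _ = 0 + ε := by field_simp; ring

theorem Differentiable.isLittleO_id_of_re_le {f : ℂ → ℂ} {g : ℝ → ℝ} (hf : Differentiable ℂ f)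
    (hg : g =o[atTop] id) (hre : ∀ᶠ R in atTop, ∀ z, ‖z‖ < R → (f z).re ≤ g R) :
    f =o[cobounded ℂ] id := by
  -- `h ‖z‖` is the Borel–Carathéodory bound at `z` on `ball 0 (2 * ‖z‖)`,
  -- where `Re f ≤ ‖g (2 * ‖z‖)‖ + 1`.
  set h : ℝ → ℝ := fun r => 2 * (‖g (2 * r)‖ + 1) + 3 * ‖f 0‖
  have hg2 : (fun r => g (2 * r)) =o[atTop] id :=
    (hg.comp_tendsto (tendsto_id.const_mul_atTop two_pos)).trans_isBigO
      (isBigO_const_mul_self 2 id atTop)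
  have hh : h =o[atTop] id :=
    ((hg2.norm_left.add (isLittleO_const_id_atTop 1)).const_mul_left 2).add
      (isLittleO_const_id_atTop _)
  obtain ⟨R₀, hR₀⟩ := eventually_atTop.mp hre
  have hbound : ∀ᶠ z in cobounded ℂ, ‖f z‖ ≤ ‖h ‖z‖‖ := by
    filter_upwards [eventually_cobounded_le_norm (max R₀ 1)] with z hz
    have hz0 : 0 < ‖z‖ := lt_of_lt_of_le one_pos (le_of_max_le_right hz)
    have hmaps : Set.MapsTo f (ball 0 (2 * ‖z‖)) {w | w.re ≤ ‖g (2 * ‖z‖)‖ + 1} := by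
      intro w hw
      have hfw := hR₀ (2 * ‖z‖) (by linarith [le_of_max_le_left hz]) w (by simpa using hw)
      show (f w).re ≤ _
      linarith [Real.le_norm_self (g (2 * ‖z‖))]
    have hbc := Complex.borelCaratheodory (by positivity) hf.differentiableOn hmaps
      (by positivity) (mem_ball_zero_iff.mpr (by linarith))
    calc ‖f z‖ ≤ h ‖z‖ := by
          convert hbc using 1
          field_simp
          ring
      _ ≤ ‖h ‖z‖‖ := Real.le_norm_self _
  exact (IsBigO.of_bound' hbound).trans_isLittleO
    (isLittleO_norm_right.mp (hh.comp_tendsto tendsto_norm_cobounded_atTop))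

theorem InnerProductSpace.HarmonicOnNhd.exists_const_forall_eq_of_le_log {v : ℂ → ℝ}
    (hv : HarmonicOnNhd v Set.univ) {C : ℝ}
    (hgr : ∀ᶠ z in cobounded ℂ, v z ≤ C * Real.log ‖z‖) : ∃ c, ∀ z, v z = c := by
  obtain ⟨F, hF, hFv⟩ := hv.exists_analyticOnNhd_univ_re_eq
  have hFd : Differentiable ℂ F := fun z => (hF z (Set.mem_univ z)).differentiableAt
  obtain ⟨r, -, hr⟩ := hasBasis_cobounded_norm.eventually_iff.mp hgr
  obtain ⟨K, hK⟩ := (isCompact_closedBall (0 : ℂ) (max r 1)).exists_bound_of_continuousOn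
    (hv.continuousOn.mono (Set.subset_univ _))
  have hball : ∀ᶠ R in atTop, ∀ z, ‖z‖ < R → (F z).re ≤ |C| * Real.log R + K := by
    filter_upwards [eventually_ge_atTop (max r 1)] with R hR z hz
    have hClogR : 0 ≤ |C| * Real.log R :=
      mul_nonneg (abs_nonneg C) (Real.log_nonneg (le_of_max_le_right hR))
    rw [congrFun hFv z]
    rcases le_or_gt ‖z‖ (max r 1) with hzin | hzout
    · have hvK : ‖v z‖ ≤ K := hK z (by simpa using hzin)
      linarith [Real.le_norm_self (v z)]
    · have hz1 : 1 ≤ ‖z‖ := (le_max_right r 1).trans hzout.le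
      have hK0 : 0 ≤ K := (norm_nonneg _).trans (hK 0 (by simp))
      calc v z ≤ C * Real.log ‖z‖ := hr (le_of_max_le_left hzout.le)
        _ ≤ |C| * Real.log ‖z‖ := by gcongr; exacts [Real.log_nonneg hz1, le_abs_self C]
        _ ≤ |C| * Real.log R := by gcongr
        _ ≤ |C| * Real.log R + K := by linarith
  have hlog : (fun R => |C| * Real.log R + K) =o[atTop] id :=
    (Real.isLittleO_log_id_atTop.const_mul_left |C|).add (isLittleO_const_id_atTop K)
  refine ⟨v 0, fun z => ?_⟩
  rw [← hFv]
  exact congrArg Complex.re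
    (hFd.apply_eq_apply_of_isLittleO_id (hFd.isLittleO_id_of_re_le hlog hball) z 0)

/-- generalized Liouville theorem: a function harmonic on all of `ℝ²`
satisfying `u(x) = O(log |x|)` as `|x| → ∞` is constant. -/
theorem stmt_2 (u : EuclideanSpace ℝ (Fin 2) → ℝ)
    (hreg : ContDiff ℝ 2 u)
    (hharm : ∀ x, lap u x = 0)
    (hgrowth : ∃ C M : ℝ, 0 < C ∧ 0 < M ∧
      ∀ x : EuclideanSpace ℝ (Fin 2), M ≤ ‖x‖ → |u x| ≤ C * Real.log ‖x‖) :
    ∃ c : ℝ, ∀ x, u x = c := by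
  obtain ⟨C, M, -, -, hgr⟩ := hgrowth
  let e : ℂ ≃ₗᵢ[ℝ] EuclideanSpace ℝ (Fin 2) := Complex.orthonormalBasisOneI.repr
  have hu : HarmonicOnNhd u Set.univ := fun x _ =>
    ⟨hreg.contDiffAt, .of_forall fun y => by rw [← lap_eq_laplacian hreg, hharm]; rfl⟩
  have hv : HarmonicOnNhd (u ∘ e) Set.univ := fun z _ =>
    (hu (e z) (Set.mem_univ _)).comp_linearIsometryEquiv e
  have hvgr : ∀ᶠ z in cobounded ℂ, (u ∘ e) z ≤ C * Real.log ‖z‖ := by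
    filter_upwards [eventually_cobounded_le_norm M] with z hz
    simpa [e] using (le_abs_self _).trans (hgr (e z) (by simpa [e] using hz))
  obtain ⟨c, hc⟩ := hv.exists_const_forall_eq_of_le_log hvgr
  exact ⟨c, fun x => by simpa using hc (e.symm x)⟩
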